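/- Fix λ > 1 and define F(s,λ) = θ'(s) − δ(s) + s for 0 ≤ s < √λ − 1. Then F(0,λ) = 0, and there exists a unique s* ∈ (0, √λ − 1) with F(s*,λ) = 0; moreover F(s,λ) > 0 for all s ∈ (0, s*) and F(s,λ) < 0 for all s ∈ (s*, √λ − 1). -/

import Mathlib

open Filter Topology

/-- `θ'(s) = ((1+s²−λ) + √((1+s²−λ)² − 4s²))/2`. -/
noncomputable def theta' (s lam : ℝ) : ℝ :=
  ((1 + s ^ 2 - lam) + Real.sqrt ((1 + s ^ 2 - lam) ^ 2 - 4 * s ^ 2)) / 2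

/-- `δ(s) = s²λ/(λ−1)`. -/
noncomputable def adelta (s lam : ℝ) : ℝ := s ^ 2 * lam / (lam - 1)

/-- `F(s,λ) = θ'(s) − δ(s) + s`. -/
noncomputable def Ffun (s lam : ℝ) : ℝ := theta' s lam - adelta s lam + s

/-!
Write `F = (√D - w) / 2` with `D = (1 + s² - λ)² - 4s²` and `w = 2(δ - s) - (1 + s² - λ)`,
where `w (λ - 1) = (λ + 1)s² - 2(λ - 1)s + (λ - 1)² > 0`. Then `(w² - D)(λ - 1)² = 4 s Q(s)`
for the cubic `Q = qCubic`, so for `s > 0` the sign of `F` is opposite to that of `Q`. Since `Q`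
is strictly increasing with `Q(0) = -(λ - 1)³ < 0` and `Q(√λ - 1) = λ²(√λ - 1)³ > 0`, its unique
root `s* ∈ (0, √λ - 1)` is the point where `F` changes sign.
-/

lemma sign_sqrt_sub {x w : ℝ} (hw : 0 < w) :
    SignType.sign (Real.sqrt x - w) = SignType.sign (x - w ^ 2) := by
  rcases le_or_gt 0 x with hx | hx
  · rw [← Real.sq_sqrt hx, Real.sqrt_sq (Real.sqrt_nonneg x),
      show Real.sqrt x ^ 2 - w ^ 2 = (Real.sqrt x - w) * (Real.sqrt x + w) by ring, sign_mul,
      sign_pos (by positivity : 0 < Real.sqrt x + w), mul_one]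
  · rw [Real.sqrt_eq_zero_of_nonpos hx.le, sign_neg (by linarith), sign_neg (by nlinarith)]

lemma StrictMono.sign_eq_sign_sub {f : ℝ → ℝ} (hf : StrictMono f) {c : ℝ} (hc : f c = 0)
    (x : ℝ) :
    SignType.sign (f x) = SignType.sign (x - c) := by
  rcases lt_trichotomy x c with h | rfl | h
  · rw [sign_neg (hc ▸ hf h), sign_neg (sub_neg.2 h)]
  · rw [hc, sub_self]
  · rw [sign_pos (hc ▸ hf h), sign_pos (sub_pos.2 h)]

noncomputable def qCubic (s lam : ℝ) : ℝ :=
  lam * s ^ 3 - (lam + 1) * (lam - 1) * s ^ 2 + (lam + 2) * (lam - 1) ^ 2 * s - (lam - 1) ^ 3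

lemma qCubic_strictMono {lam : ℝ} (hlam : 1 < lam) : StrictMono (qCubic · lam) := by
  intro x y hxy
  set q := lam * (x ^ 2 + x * y + y ^ 2) - (lam ^ 2 - 1) * (x + y) + (lam + 2) * (lam - 1) ^ 2
  have hq : 0 < q := by
    nlinarith [sq_nonneg (2 * lam * x + lam * y - (lam ^ 2 - 1)),
      sq_nonneg (3 * lam * y - (lam ^ 2 - 1)),
      mul_pos (pow_pos (sub_pos.2 hlam) 2) (show (0:ℝ) < 2 * lam ^ 2 + 4 * lam - 1 by nlinarith)]
  have hdiff : qCubic y lam - qCubic x lam = (y - x) * q := by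
    simp only [qCubic, q]; ring
  nlinarith [mul_pos (sub_pos.2 hxy) hq]

lemma exists_qCubic_eq_zero {lam : ℝ} (hlam : 1 < lam) :
    ∃ s ∈ Set.Ioo 0 (Real.sqrt lam - 1), qCubic s lam = 0 := by
  have hr : 0 < Real.sqrt lam - 1 := by
    rw [sub_pos, Real.lt_sqrt zero_le_one]; linarith
  have hQ0 : qCubic 0 lam < 0 := by
    have : qCubic 0 lam = -(lam - 1) ^ 3 := by simp only [qCubic]; ring
    rw [this, neg_neg_iff_pos]; exact pow_pos (sub_pos.2 hlam) 3
  have hQr : 0 < qCubic (Real.sqrt lam - 1) lam := by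
    have : qCubic (Real.sqrt lam - 1) lam = (Real.sqrt lam - 1) ^ 3 * lam ^ 2 := by
      have h := Real.sq_sqrt (by linarith : 0 ≤ lam)
      generalize Real.sqrt lam = r at h ⊢
      subst h; simp only [qCubic]; ring
    rw [this]; positivity
  exact intermediate_value_Ioo hr.le (by unfold qCubic; fun_prop) ⟨hQ0, hQr⟩

lemma Ffun_zero {lam : ℝ} (hlam : 1 ≤ lam) : Ffun 0 lam = 0 := by
  rw [Ffun, theta', adelta, show (1 + (0:ℝ) ^ 2 - lam) ^ 2 - 4 * 0 ^ 2 = (lam - 1) ^ 2 by ring,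
    Real.sqrt_sq (by linarith)]
  ring

lemma sign_Ffun {s lam : ℝ} (hlam : 1 < lam) (hs : 0 < s) :
    SignType.sign (Ffun s lam) = -SignType.sign (qCubic s lam) := by
  have hlam1 : 0 < lam - 1 := sub_pos.2 hlam
  set a := 1 + s ^ 2 - lam
  set D := a ^ 2 - 4 * s ^ 2
  set w := 2 * (adelta s lam - s) - a
  have hw : 0 < w := by
    have : w = ((lam + 1) * s ^ 2 - 2 * (lam - 1) * s + (lam - 1) ^ 2) / (lam - 1) := by
      simp only [w, a, adelta]; field_simp; ring
    rw [this]
    exact div_pos (by nlinarith [sq_nonneg ((lam + 1) * s - (lam - 1))]) hlam1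
  have hF : Ffun s lam = 2⁻¹ * (Real.sqrt D - w) := by
    simp only [Ffun, theta', w, D]; ring
  have hkey : D - w ^ 2 = -(4 * s / (lam - 1) ^ 2 * qCubic s lam) := by
    simp only [D, w, a, adelta, qCubic]; field_simp; ring
  rw [hF, sign_mul, sign_pos (by positivity : (0:ℝ) < 2⁻¹), one_mul, sign_sqrt_sub hw, hkey,
    Left.sign_neg, sign_mul, sign_pos (by positivity : 0 < 4 * s / (lam - 1) ^ 2), one_mul]

theorem stmt17 (lam : ℝ) (hlam : 1 < lam) :
    Ffun 0 lam = 0 ∧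
    ∃ sstar : ℝ, sstar ∈ Set.Ioo 0 (Real.sqrt lam - 1) ∧ Ffun sstar lam = 0 ∧
      (∀ s ∈ Set.Ioo 0 sstar, 0 < Ffun s lam) ∧
      (∀ s ∈ Set.Ioo sstar (Real.sqrt lam - 1), Ffun s lam < 0) ∧
      (∀ s ∈ Set.Ioo 0 (Real.sqrt lam - 1), Ffun s lam = 0 → s = sstar) := by
  obtain ⟨sstar, hmem, hroot⟩ := exists_qCubic_eq_zero hlam
  have hsign (s : ℝ) (hs : 0 < s) : SignType.sign (Ffun s lam) = SignType.sign (sstar - s) := by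
    rw [sign_Ffun hlam hs, (qCubic_strictMono hlam).sign_eq_sign_sub hroot, ← Left.sign_neg,
      neg_sub]
  refine ⟨Ffun_zero hlam.le, sstar, hmem, ?_, fun s hs => ?_, fun s hs => ?_, fun s hs hF => ?_⟩
  · rw [← sign_eq_zero_iff, hsign sstar hmem.1, sub_self, sign_zero]
  · rw [← sign_eq_one_iff, hsign s hs.1, sign_eq_one_iff, sub_pos]; exact hs.2
  · rw [← sign_eq_neg_one_iff, hsign s (hmem.1.trans hs.1), sign_eq_neg_one_iff, sub_neg]
    exact hs.1
  · rw [← sign_eq_zero_iff, hsign s hs.1, sign_eq_zero_iff, sub_eq_zero] at hF; exact hF.symm
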